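/- arXiv:2212.11383 — 2 statements merged into one kernel-verified Lean document; each statement's English description precedes it below -/
import Mathlib

section
/- Let K be the field ℝ or ℂ, (V, B) a finite-dimensional symplectic vector space over K, and P : V → V a nilpotent operator self-adjoint with respect to B whose Jordan block sizes are exactly k_1 > k_2 > … > k_N (each size k_i occurring with some positive multiplicity). Then a subspace W ⊆ V is invariant under Aut(V, B, P) if and only if there exist integers m_1, …, m_N satisfying 0 ≤ m_N ≤ k_N and 0 ≤ m_i − m_{i+1} ≤ k_i − k_{i+1} for all 1 ≤ i ≤ N−1, such that W = Σ_{i=1}^N (Ker P^{m_i} ∩ Im P^{k_i − m_i}). -/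
/-!
Invariance under `Aut(V, B, P)` passes to its Lie algebra: `W` is stable under every
`B`-skew-adjoint `A` commuting with `P` (through Cayley transforms), and under the projections
`πᵢ` onto the components `Vᵢ` (through the reflections `1 - 2πᵢ`), so `W = ⨁ᵢ (W ∩ Vᵢ)`. Let `mᵢ`
be the least `m` with `P^m = 0` on `W ∩ Vᵢ`.

If `w ∈ W ∩ Vᵢ` has height `d + 1`, nondegeneracy of `B` on `Vᵢ` gives `x ∈ Vᵢ` dual to the
string `w, P w, …, P^d w`. For `y` with `P^(n+1) y = 0`, the skew operator
`z ↦ ∑_{a+b=n} P^a (B (P^b z) x • y + B (P^b z) y • x)` commutes with `P` and sends `w` to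
`P^(n-d) y` plus multiples of the `P^a x` with `a ≥ n - d`, which lie in `W` by the choice
`y = P^(a-(n-d)) x`. Taking `n + 1 = max kᵢ kⱼ`, and using that on `Vⱼ`, where all Jordan blocks
have size `kⱼ`, the kernel of `P^e` is the image of `P^(kⱼ-e)`, this gives
`Ker P^(mᵢ - (kᵢ - kⱼ)) ∩ Vⱼ ⊆ W`. These inclusions yield both the inequalities
`mᵢ - (kᵢ - kⱼ) ≤ mⱼ` and `W = ∑ᵢ Ker P^mᵢ ∩ Im P^(kᵢ-mᵢ)`. Conversely, kernels and images of
powers of `P` are preserved by every automorphism commuting with `P`.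
-/

/-- A submodule `W` is invariant under `Aut(V, B, P)`, the group of linear automorphisms
preserving the bilinear form `B` and commuting with the operator `P`. -/
def IsInvariantSubmodule {K V : Type*} [Field K] [AddCommGroup V] [Module K V]
    (B : LinearMap.BilinForm K V) (P : Module.End K V) (W : Submodule K V) : Prop :=
  ∀ g : V ≃ₗ[K] V, (∀ u v : V, B (g u) (g v) = B u v) → (∀ v : V, g (P v) = P (g v)) →
    W.map (g : V →ₗ[K] V) = W

open LinearMap (ker range)

/-! ### Automorphisms commuting with `P` -/

section Commute

variable {R M : Type*} [Semiring R] [AddCommMonoid M] [Module R M] {g : M ≃ₗ[R] M}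
  {f : Module.End R M}

theorem LinearEquiv.map_ker_eq_of_commute (h : ∀ v, g (f v) = f (g v)) :
    (ker f).map (g : M →ₗ[R] M) = ker f := by
  ext x
  refine ⟨?_, fun hx ↦ ⟨g.symm x, g.injective ?_, g.apply_symm_apply x⟩⟩
  · rintro ⟨y, hy, rfl⟩
    rw [LinearMap.mem_ker, LinearEquiv.coe_coe, ← h, hy, map_zero]
  · rw [h, g.apply_symm_apply, hx, map_zero]

theorem LinearEquiv.map_range_eq_of_commute (h : ∀ v, g (f v) = f (g v)) :
    (range f).map (g : M →ₗ[R] M) = range f := by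
  ext x
  refine ⟨?_, fun ⟨y, hy⟩ ↦ ⟨f (g.symm y), ⟨_, rfl⟩, ?_⟩⟩
  · rintro ⟨_, ⟨y, rfl⟩, rfl⟩
    exact ⟨g y, (h y).symm⟩
  · rw [LinearEquiv.coe_coe, h, g.apply_symm_apply, hy]

end Commute

theorem isInvariantSubmodule_iSup_ker_pow_inf_range_pow {K V ι : Type*} [Field K]
    [AddCommGroup V] [Module K V] (B : LinearMap.BilinForm K V) (P : Module.End K V)
    (m n : ι → ℕ) : IsInvariantSubmodule B P (⨆ i, ker (P ^ m i) ⊓ range (P ^ n i)) := by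
  intro g _ hgP
  have hgP' : Commute (g : Module.End K V) P := LinearMap.ext hgP
  have hg (a : ℕ) (v : V) : g ((P ^ a) v) = (P ^ a) (g v) := congr($((hgP'.pow_right a).eq) v)
  simp only [Submodule.map_iSup, Submodule.map_inf _ g.injective,
    g.map_ker_eq_of_commute (hg _), g.map_range_eq_of_commute (hg _)]

/-! ### Projections onto the components of an internal direct sum -/

theorem iSupIndep.isCompl_iSup_ne {α ι : Type*} [CompleteLattice α] {t : ι → α}
    (ht : iSupIndep t) (htop : ⨆ i, t i = ⊤) (j : ι) :
    IsCompl (t j) (⨆ (l) (_ : l ≠ j), t l) :=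
  ⟨ht j, codisjoint_iff.mpr (by rw [← iSup_split_single, htop])⟩

theorem LinearMap.ext_of_iSup_eq_top {R M N ι : Type*} [Semiring R] [AddCommMonoid M]
    [Module R M] [AddCommMonoid N] [Module R N] {A : ι → Submodule R M}
    (htop : ⨆ i, A i = ⊤) {f g : M →ₗ[R] N} (h : ∀ i, ∀ x ∈ A i, f x = g x) : f = g :=
  LinearMap.ext fun x ↦ Submodule.iSup_induction A (motive := fun x ↦ f x = g x)
    (htop ▸ Submodule.mem_top) h (by simp) fun x y hx hy ↦ by simp [hx, hy]

theorem LinearMap.BilinForm.apply_eq_zero_of_mem_iSup_ne {R M ι : Type*} [CommRing R]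
    [AddCommGroup M] [Module R M] {A : ι → Submodule R M} {B : LinearMap.BilinForm R M}
    (horth : ∀ i j, i ≠ j → ∀ u ∈ A i, ∀ v ∈ A j, B u v = 0) {j : ι} {u v : M} (hu : u ∈ A j)
    (hv : v ∈ ⨆ (l) (_ : l ≠ j), A l) : B u v = 0 ∧ B v u = 0 := by
  have : ⨆ (l) (_ : l ≠ j), A l ≤ LinearMap.ker (B u) ⊓ LinearMap.ker (B.flip u) :=
    iSup₂_le fun l hl v hv ↦ ⟨horth j l (Ne.symm hl) u hu v hv, horth l j hl v hv u hu⟩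
  exact this hv

namespace iSupIndep

variable {R M ι : Type*} [Ring R] [AddCommGroup M] [Module R M] {A : ι → Submodule R M}
  (hA : iSupIndep A) (htop : ⨆ i, A i = ⊤)

noncomputable def projection (j : ι) : Module.End R M :=
  (A j).projection _ (hA.isCompl_iSup_ne htop j)

theorem projection_apply_mem (j : ι) (x : M) : hA.projection htop j x ∈ A j :=
  Submodule.projection_apply_mem _ x

theorem projection_apply_of_mem {j : ι} {x : M} (hx : x ∈ A j) : hA.projection htop j x = x :=
  Submodule.projection_apply_of_mem_left _ hx

theorem projection_apply_of_mem_ne {j l : ι} (hlj : l ≠ j) {x : M} (hx : x ∈ A l) :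
    hA.projection htop j x = 0 :=
  (Submodule.projection_apply_eq_zero_iff _).mpr (le_iSup₂ (f := fun l _ ↦ A l) l hlj hx)

theorem sub_projection_apply_mem (j : ι) (x : M) :
    x - hA.projection htop j x ∈ ⨆ (l) (_ : l ≠ j), A l :=
  Submodule.sub_projection_mem _ x

theorem sum_projection [Fintype ι] : ∑ j, hA.projection htop j = 1 := by
  classical
  refine LinearMap.ext_of_iSup_eq_top htop fun l x hx ↦ ?_
  rw [LinearMap.sum_apply, Finset.sum_eq_single l, hA.projection_apply_of_mem htop hx]
  · rfl
  · exact fun j _ hjl ↦ hA.projection_apply_of_mem_ne htop hjl.symm hx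
  · simp

theorem le_iSup_of_projection_mem [Fintype ι] {S : Submodule R M} {T : ι → Submodule R M}
    (h : ∀ j, ∀ z ∈ S, hA.projection htop j z ∈ T j) : S ≤ ⨆ j, T j := fun z hz ↦ by
  rw [← Module.End.one_apply (R := R) z, ← hA.sum_projection htop, LinearMap.sum_apply]
  exact Submodule.sum_mem _ fun j _ ↦ Submodule.mem_iSup_of_mem j (h j z hz)

theorem commute_projection {f : Module.End R M} (hf : ∀ i, ∀ x ∈ A i, f x ∈ A i) (j : ι) :
    Commute (hA.projection htop j) f := by
  refine LinearMap.ext_of_iSup_eq_top htop fun l x hx ↦ ?_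
  simp only [Module.End.mul_apply]
  by_cases hlj : l = j
  · subst hlj
    rw [hA.projection_apply_of_mem htop hx, hA.projection_apply_of_mem htop (hf l x hx)]
  · rw [hA.projection_apply_of_mem_ne htop hlj hx,
      hA.projection_apply_of_mem_ne htop hlj (hf l x hx), map_zero]

end iSupIndep

theorem iSupIndep.isSelfAdjoint_projection {R M ι : Type*} [CommRing R] [AddCommGroup M]
    [Module R M] {A : ι → Submodule R M} {B : LinearMap.BilinForm R M} (hA : iSupIndep A)
    (htop : ⨆ i, A i = ⊤) (horth : ∀ i j, i ≠ j → ∀ u ∈ A i, ∀ v ∈ A j, B u v = 0)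
    (j : ι) : LinearMap.IsSelfAdjoint B (hA.projection htop j) := by
  intro x y
  set π := hA.projection htop j
  have hx := LinearMap.BilinForm.apply_eq_zero_of_mem_iSup_ne horth
    (hA.projection_apply_mem htop j y) (hA.sub_projection_apply_mem htop j x)
  have hy := LinearMap.BilinForm.apply_eq_zero_of_mem_iSup_ne horth
    (hA.projection_apply_mem htop j x) (hA.sub_projection_apply_mem htop j y)
  calc B (π x) y = B (π x) (π y) + B (π x) (y - π y) := by rw [← map_add, add_sub_cancel]
    _ = B (π x) (π y) + B (x - π x) (π y) := by rw [hy.1, hx.2]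
    _ = B x (π y) := by rw [← LinearMap.add_apply, ← map_add, add_sub_cancel]

theorem iSupIndep.eq_zero_of_forall_apply_eq_zero {R M ι : Type*} [CommRing R] [AddCommGroup M]
    [Module R M] {A : ι → Submodule R M} {B : LinearMap.BilinForm R M} (hA : iSupIndep A)
    (htop : ⨆ i, A i = ⊤) (horth : ∀ i j, i ≠ j → ∀ u ∈ A i, ∀ v ∈ A j, B u v = 0)
    (hB : ∀ u, (∀ v, B u v = 0) → u = 0) {j : ι} {u : M} (hu : u ∈ A j)
    (h : ∀ v ∈ A j, B u v = 0) : u = 0 :=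
  hB u fun v ↦ by
    rw [← hA.projection_apply_of_mem htop hu, hA.isSelfAdjoint_projection htop horth]
    exact h _ (hA.projection_apply_mem htop j v)

/-! ### Reflections and Cayley transforms -/

theorem Module.End.exists_isUnit_sub_and_add {K V : Type*} [Field K] [Infinite K]
    [AddCommGroup V] [Module K V] [FiniteDimensional K V] (A : Module.End K V) :
    ∃ s : K, s ≠ 0 ∧ IsUnit (algebraMap K _ s - A) ∧ IsUnit (algebraMap K _ s + A) := by
  obtain ⟨s, hs⟩ := ((A.finite_spectrum.union
    (A.finite_spectrum.preimage neg_injective.injOn)).insert 0).exists_notMem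
  simp only [Set.mem_insert_iff, Set.mem_union, Set.mem_preimage, not_or] at hs
  refine ⟨s, hs.1, spectrum.notMem_iff.mp hs.2.1, ?_⟩
  have := (spectrum.notMem_iff.mp hs.2.2).neg
  rwa [map_neg, neg_sub', sub_neg_eq_add, neg_neg] at this

namespace IsInvariantSubmodule

variable {K V : Type*} [Field K] [AddCommGroup V] [Module K V]
  {B : LinearMap.BilinForm K V} {P : Module.End K V} {W : Submodule K V}

theorem apply_mem (hW : IsInvariantSubmodule B P W) (g : V ≃ₗ[K] V)
    (hgB : ∀ u v, B (g u) (g v) = B u v) (hgP : ∀ v, g (P v) = P (g v)) {w : V} (hw : w ∈ W) :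
    g w ∈ W :=
  hW g hgB hgP ▸ Submodule.mem_map_of_mem hw

/-- The reflection `r = 1 - 2π` is an isometry commuting with `P`, and `2π = 1 - r`. -/
theorem apply_mem_of_isIdempotentElem [NeZero (2 : K)] (hW : IsInvariantSubmodule B P W)
    {π : Module.End K V} (hπ : IsIdempotentElem π) (hπB : LinearMap.IsSelfAdjoint B π)
    (hπP : Commute π P) {w : V} (hw : w ∈ W) : π w ∈ W := by
  set r : Module.End K V := 1 - (2 : K) • π
  have hr : Function.Involutive r := fun x ↦ by
    have : r * r = 1 := by
      simp only [r, sub_mul, mul_sub, smul_mul_smul, one_mul, mul_one, hπ.eq]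
      module
    exact congr($this x)
  have hrB : ∀ u v, B (r u) (r v) = B u v := fun u v ↦ by
    have h := hπB u (π v)
    simp only [← Module.End.mul_apply, hπ.eq] at h
    simp only [r, LinearMap.sub_apply, LinearMap.smul_apply, Module.End.one_apply, map_sub,
      map_smul, hπB u v, h, smul_eq_mul]
    ring
  have hrP : ∀ v, r (P v) = P (r v) := fun v ↦ by
    simp only [r, LinearMap.sub_apply, LinearMap.smul_apply, Module.End.one_apply, map_sub,
      map_smul, ← Module.End.mul_apply, hπP.eq, one_mul]
  have hrw := hW.apply_mem (LinearEquiv.ofInvolutive r hr) hrB hrP hw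
  have h2π : (2 : K) • π w = w - r w := by
    simp only [r, LinearMap.sub_apply, LinearMap.smul_apply, Module.End.one_apply, sub_sub_cancel]
  exact (W.smul_mem_iff two_ne_zero).mp (h2π ▸ W.sub_mem hw hrw)

/-- The Cayley transform `(s + A)(s - A)⁻¹` of `A` is an isometry commuting with `P`, and
`(s - A)⁻¹` is a multiple of its sum with the identity. -/
theorem apply_mem_of_isSkewAdjoint [Infinite K] [NeZero (2 : K)] [FiniteDimensional K V]
    (hW : IsInvariantSubmodule B P W) {A : Module.End K V} (hAB : LinearMap.IsSkewAdjoint B A)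
    (hAP : Commute A P) {w : V} (hw : w ∈ W) : A w ∈ W := by
  obtain ⟨s, hs, hF, hG⟩ := A.exists_isUnit_sub_and_add
  set F := algebraMap K _ s - A
  set G := algebraMap K _ s + A
  let eF := LinearEquiv.ofBijective F ((Module.End.isUnit_iff F).mp hF)
  let g := eF.symm.trans (LinearEquiv.ofBijective G ((Module.End.isUnit_iff G).mp hG))
  have hFeF (v : V) : F (eF.symm v) = v := eF.apply_symm_apply v
  have hFG (x : V) : F x + G x = (2 * s) • x := by
    simp only [F, G, LinearMap.sub_apply, LinearMap.add_apply, Module.algebraMap_end_apply]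
    module
  have hB (a b : V) : B (G a) (G b) = B (F a) (F b) := by
    have h := hAB a b
    simp only [Pi.neg_apply, map_neg] at h
    simp only [F, G, LinearMap.sub_apply, LinearMap.add_apply, Module.algebraMap_end_apply,
      map_add, map_sub, map_smul, LinearMap.smul_apply, smul_eq_mul, h]
    ring
  have hFP : Commute F P := (Algebra.commute_algebraMap_left s P).sub_left hAP
  have hGP : Commute G P := (Algebra.commute_algebraMap_left s P).add_left hAP
  have heFP (v : V) : eF.symm (P v) = P (eF.symm v) := eF.injective <| by
    change F (eF.symm (P v)) = F (P (eF.symm v))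
    rw [hFeF, ← Module.End.mul_apply, hFP.eq, Module.End.mul_apply, hFeF]
  have hgB (u v : V) : B (g u) (g v) = B u v :=
    (hB (eF.symm u) (eF.symm v)).trans (by rw [hFeF, hFeF])
  have hgP (v : V) : g (P v) = P (g v) := by
    simp only [g, LinearEquiv.trans_apply, heFP]
    exact congr($hGP.eq _)
  have hgW : ∀ v ∈ W, eF.symm v ∈ W := fun v hv ↦ by
    have h2s : (2 * s) • eF.symm v = v + g v := by rw [← hFG, hFeF]; rfl
    exact (W.smul_mem_iff (mul_ne_zero two_ne_zero hs)).mp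
      (h2s ▸ W.add_mem hv (hW.apply_mem g hgB hgP hv))
  have hmap : W.map (eF.symm : V →ₗ[K] V) = W :=
    Submodule.eq_of_le_of_finrank_eq (Submodule.map_le_iff_le_comap.mpr hgW)
      (LinearEquiv.finrank_map_eq eF.symm W)
  obtain ⟨v, hv, rfl⟩ := (hmap.symm ▸ hw : w ∈ W.map (eF.symm : V →ₗ[K] V))
  rw [LinearEquiv.coe_coe, show A (eF.symm v) = s • eF.symm v - F (eF.symm v) by simp [F], hFeF]
  exact W.sub_mem (W.smul_mem _ (hgW v hv)) hv

end IsInvariantSubmodule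

/-! ### Skew-adjoint operators built from a string and its dual -/

open Finset in
theorem commute_sum_antidiagonal_pow_mul_pow {R : Type*} [Ring R] {p s : R} {n : ℕ}
    (hl : p ^ (n + 1) * s = 0) (hr : s * p ^ (n + 1) = 0) :
    Commute p (∑ q ∈ antidiagonal n, p ^ q.1 * s * p ^ q.2) := by
  have h₁ := Nat.sum_antidiagonal_succ (n := n) (f := fun q : ℕ × ℕ ↦ p ^ q.1 * s * p ^ q.2)
  have h₂ := Nat.sum_antidiagonal_succ' (n := n) (f := fun q : ℕ × ℕ ↦ p ^ q.1 * s * p ^ q.2)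
  simp only [pow_zero, one_mul, mul_one, hl, hr, zero_add] at h₁ h₂
  rw [Commute, SemiconjBy, mul_sum, sum_mul]
  calc _ = ∑ q ∈ antidiagonal n, p ^ (q.1 + 1) * s * p ^ q.2 :=
        sum_congr rfl fun q _ ↦ by simp only [pow_succ', mul_assoc]
    _ = ∑ q ∈ antidiagonal n, p ^ q.1 * s * p ^ (q.2 + 1) := h₁.symm.trans h₂
    _ = _ := sum_congr rfl fun q _ ↦ by simp only [pow_succ, mul_assoc]

theorem Finset.Nat.sum_antidiagonal_ite_snd {M : Type*} [AddCommMonoid M] {n d : ℕ}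
    (hd : d ≤ n) (f : ℕ → M) :
    ∑ q ∈ antidiagonal n, (if q.2 = d then f q.1 else 0) = f (n - d) := by
  rw [Finset.sum_eq_single_of_mem (n - d, d) (by simp [hd]), if_pos rfl]
  rintro ⟨a, b⟩ hab hne
  rw [Finset.HasAntidiagonal.mem_antidiagonal] at hab
  exact if_neg fun h ↦ hne (by simp only at h; ext <;> simp <;> omega)

section Form

variable {R M : Type*} [CommRing R] [AddCommGroup M] [Module R M]
  {B : LinearMap.BilinForm R M} {P : Module.End R M}

theorem LinearMap.IsSelfAdjoint.pow (hP : LinearMap.IsSelfAdjoint B P) (n : ℕ) :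
    LinearMap.IsSelfAdjoint B ⇑(P ^ n) := by
  induction n with
  | zero => exact fun u v ↦ rfl
  | succ n ih =>
    intro u v
    rw [pow_succ, Module.End.mul_apply, ih, hP, ← Module.End.mul_apply, (Commute.self_pow P n).eq]

theorem LinearMap.BilinForm.IsAlt.isSkewAdjoint_smulRight_add (hB : B.IsAlt) (x y : M) :
    LinearMap.IsSkewAdjoint B ⇑((B.flip x).smulRight y + (B.flip y).smulRight x) := by
  intro z t
  simp only [Pi.neg_apply, LinearMap.coe_smulRight, LinearMap.BilinForm.flip_apply,
    map_add, map_smul, map_neg, LinearMap.add_apply, LinearMap.smul_apply, smul_eq_mul,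
    ← hB.neg_eq x t, ← hB.neg_eq y t]
  ring

open Finset in
theorem LinearMap.IsSelfAdjoint.isSkewAdjoint_sum_antidiagonal
    (hP : LinearMap.IsSelfAdjoint B P) {S : Module.End R M} (hS : LinearMap.IsSkewAdjoint B S)
    (n : ℕ) : LinearMap.IsSkewAdjoint B ⇑(∑ q ∈ antidiagonal n, P ^ q.1 * S * P ^ q.2) := by
  intro x y
  have hterm (a b : ℕ) : B ((P ^ a * S * P ^ b) x) y = -B x ((P ^ b * S * P ^ a) y) := by
    simp only [Module.End.mul_apply]
    rw [hP.pow a, hS, Pi.neg_apply, map_neg, hP.pow b]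
  simp only [Pi.neg_apply, map_sum, LinearMap.sum_apply, map_neg]
  rw [← Nat.sum_antidiagonal_swap, ← sum_neg_distrib]
  exact sum_congr rfl fun q _ ↦ hterm _ _

end Form

section Core

open Finset

variable {K V : Type*} [Field K] [AddCommGroup V] [Module K V]
  {B : LinearMap.BilinForm K V} {P : Module.End K V}

theorem exists_mem_forall_apply_pow_eq_ite (hP : LinearMap.IsSelfAdjoint B P) {U : Submodule K V}
    (hU : ∀ x ∈ U, P x ∈ U) (hnd : ∀ u ∈ U, (∀ v ∈ U, B u v = 0) → u = 0) {w : V} {d : ℕ}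
    (hw : w ∈ U) (hd : (P ^ d) w ≠ 0) (hd1 : (P ^ (d + 1)) w = 0) :
    ∃ x ∈ U, ∀ l, B ((P ^ l) w) x = if l = d then 1 else 0 := by
  have hPU (n : ℕ) {x : V} (hx : x ∈ U) : (P ^ n) x ∈ U :=
    Module.End.pow_apply_mem_of_forall_mem n hU x hx
  suffices ∀ r ≤ d, ∃ x ∈ U, ∀ l, d - r ≤ l → B ((P ^ l) w) x = if l = d then 1 else 0 by
    obtain ⟨x, hx, h⟩ := this d le_rfl
    exact ⟨x, hx, fun l ↦ h l (by omega)⟩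
  intro r hr
  induction r with
  | zero =>
    obtain ⟨v, hv, hv0⟩ : ∃ v ∈ U, B ((P ^ d) w) v ≠ 0 := by
      by_contra! h
      exact hd (hnd _ (hPU d hw) h)
    refine ⟨(B ((P ^ d) w) v)⁻¹ • v, U.smul_mem _ hv, fun l hl ↦ ?_⟩
    rcases (Nat.sub_zero d ▸ hl).eq_or_lt with rfl | hlt
    · simp [hv0]
    · rw [if_neg hlt.ne', Module.End.pow_map_zero_of_le hlt hd1, map_zero, LinearMap.zero_apply]
  | succ r ih =>
    -- `P^(r+1) x` pairs with `P^l w` as `x` pairs with `P^(l+r+1) w`, so subtracting a multiple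
    -- of it corrects the pairing with `P^(d-r-1) w` and leaves the higher ones unchanged
    obtain ⟨x, hx, h⟩ := ih (by omega)
    set e := B ((P ^ (d - (r + 1))) w) x
    refine ⟨x - e • (P ^ (r + 1)) x, U.sub_mem hx (U.smul_mem _ (hPU _ hx)), fun l hl ↦ ?_⟩
    have hshift : B ((P ^ l) w) ((P ^ (r + 1)) x) = if l = d - (r + 1) then 1 else 0 := by
      rw [← hP.pow, ← Module.End.mul_apply, ← pow_add, h _ (by omega)]
      exact if_congr (by omega) rfl rfl
    rw [map_sub, map_smul, hshift, smul_eq_mul]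
    rcases hl.eq_or_lt with rfl | hlt
    · rw [if_pos rfl, if_neg (by omega), mul_one, sub_self]
    · rw [h l (by omega), if_neg hlt.ne', mul_zero, sub_zero]

variable [Infinite K] [NeZero (2 : K)] [FiniteDimensional K V] {W : Submodule K V}

/-- The image of `w` under `∑_{a+b=n} P^a S P^b` with `S z = B z x • y + B z y • x`, which is
skew-adjoint and commutes with `P`. -/
theorem IsInvariantSubmodule.sum_antidiagonal_mem (hW : IsInvariantSubmodule B P W)
    (hB : B.IsAlt) (hP : LinearMap.IsSelfAdjoint B P) {n : ℕ} {x y : V}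
    (hx : (P ^ (n + 1)) x = 0) (hy : (P ^ (n + 1)) y = 0) {w : V} (hw : w ∈ W) :
    ∑ q ∈ antidiagonal n, (B ((P ^ q.2) w) x • (P ^ q.1) y + B ((P ^ q.2) w) y • (P ^ q.1) x)
      ∈ W := by
  set S := (B.flip x).smulRight y + (B.flip y).smulRight x
  have hSP : P ^ (n + 1) * S = 0 := LinearMap.ext fun z ↦ by simp [S, hx, hy]
  have hPS : S * P ^ (n + 1) = 0 := LinearMap.ext fun z ↦ by
    simp [S, hP.pow (n + 1) z, hx, hy]
  have := hW.apply_mem_of_isSkewAdjoint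
    (hP.isSkewAdjoint_sum_antidiagonal (hB.isSkewAdjoint_smulRight_add x y) n)
    (commute_sum_antidiagonal_pow_mul_pow hSP hPS).symm hw
  simpa [S] using this

theorem IsInvariantSubmodule.pow_apply_mem (hW : IsInvariantSubmodule B P W) (hB : B.IsAlt)
    (hP : LinearMap.IsSelfAdjoint B P) {w x : V} {d n : ℕ} (hdn : d ≤ n) (hw : w ∈ W)
    (hwd : (P ^ (d + 1)) w = 0) (hdual : ∀ l, B ((P ^ l) w) x = if l = d then 1 else 0)
    (hx : (P ^ (n + 1)) x = 0) {y : V} (hy : (P ^ (n + 1)) y = 0) : (P ^ (n - d)) y ∈ W := by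
  have hsum (y : V) (hy : (P ^ (n + 1)) y = 0) :
      (P ^ (n - d)) y + ∑ q ∈ antidiagonal n, B ((P ^ q.2) w) y • (P ^ q.1) x ∈ W := by
    have := hW.sum_antidiagonal_mem hB hP hx hy hw
    simp only [hdual, ite_smul, one_smul, zero_smul, sum_add_distrib] at this
    rwa [Nat.sum_antidiagonal_ite_snd hdn (fun a ↦ (P ^ a) y)] at this
  -- with `y = P^(a-(n-d)) x` both parts of `hsum` equal `P^a x`
  have hxW (a : ℕ) (ha : n - d ≤ a) : (P ^ a) x ∈ W := by
    rcases le_or_gt a n with han | hna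
    · have h := hsum ((P ^ (a - (n - d))) x) (by
        rw [← Module.End.mul_apply, ← pow_add, Module.End.pow_map_zero_of_le (by omega) hx])
      have hterm (q : ℕ × ℕ) (hq : q ∈ antidiagonal n) :
          B ((P ^ q.2) w) ((P ^ (a - (n - d))) x) • (P ^ q.1) x
            = if q.2 = n - a then (P ^ q.1) x else 0 := by
        rw [Finset.HasAntidiagonal.mem_antidiagonal] at hq
        rw [← hP.pow, ← Module.End.mul_apply, ← pow_add, hdual, ite_smul, one_smul, zero_smul]
        exact if_congr (by omega) rfl rfl
      rw [sum_congr rfl hterm, Nat.sum_antidiagonal_ite_snd (by omega) (fun a ↦ (P ^ a) x),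
        ← Module.End.mul_apply, ← pow_add, Nat.sub_sub_self han, Nat.add_sub_cancel' ha,
        ← two_smul K] at h
      exact (W.smul_mem_iff two_ne_zero).mp h
    · rw [Module.End.pow_map_zero_of_le hna hx]
      exact W.zero_mem
  have hterm : ∀ q ∈ antidiagonal n, B ((P ^ q.2) w) y • (P ^ q.1) x ∈ W := by
    rintro ⟨a, b⟩ hab
    rw [Finset.HasAntidiagonal.mem_antidiagonal] at hab
    rcases le_or_gt b d with hbd | hdb
    · exact W.smul_mem _ (hxW a (by omega))
    · rw [Module.End.pow_map_zero_of_le hdb hwd, map_zero, LinearMap.zero_apply, zero_smul]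
      exact W.zero_mem
  simpa using W.sub_mem (hsum y hy) (W.sum_mem hterm)

end Core

/-! ### Uniform Jordan blocks -/

section Blocks

variable {R M : Type*} [Ring R] [AddCommGroup M] [Module R M]

/-- All Jordan blocks of `Q` have size `k`. -/
def Module.End.HasUniformBlockSize (Q : Module.End R M) (k : ℕ) : Prop :=
  Q ^ k = 0 ∧ ker Q ≤ range (Q ^ (k - 1))

theorem Module.End.ker_pow_le_range_pow {Q : Module.End R M} {k : ℕ}
    (hker : ker Q ≤ range (Q ^ (k - 1))) (m : ℕ) : ker (Q ^ m) ≤ range (Q ^ (k - m)) := by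
  induction m with
  | zero =>
    intro x hx
    rw [LinearMap.mem_ker, pow_zero, Module.End.one_apply] at hx
    exact hx ▸ Submodule.zero_mem _
  | succ m ih =>
    intro x hx
    rw [LinearMap.mem_ker] at hx
    by_cases hkm : k ≤ m + 1
    · simp [Nat.sub_eq_zero_of_le hkm]
    obtain ⟨z, hz⟩ := hker (show (Q ^ m) x ∈ ker Q by
      rwa [LinearMap.mem_ker, ← Module.End.mul_apply, ← pow_succ'])
    obtain ⟨y, hy⟩ := ih (x := x - (Q ^ (k - 1 - m)) z) (by
      rw [LinearMap.mem_ker, map_sub, ← Module.End.mul_apply, ← pow_add,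
        show m + (k - 1 - m) = k - 1 by omega, hz, sub_self])
    refine ⟨Q y + z, ?_⟩
    rw [map_add, ← Module.End.mul_apply, ← pow_succ, show k - (m + 1) + 1 = k - m by omega, hy,
      show k - (m + 1) = k - 1 - m by omega, sub_add_cancel]

namespace Module.End.HasUniformBlockSize

variable {Q : Module.End R M} {k : ℕ} (h : Q.HasUniformBlockSize k)
include h

theorem exists_pow_apply_ne_zero [Nontrivial M] : ∃ u, (Q ^ (k - 1)) u ≠ 0 := by
  by_contra! h0
  obtain _ | k := k
  · exact one_ne_zero (pow_zero Q ▸ h.1)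
  have hsurj : Function.Surjective Q := fun x ↦ by
    simpa using ker_pow_le_range_pow h.2 k (h0 x)
  obtain ⟨x, hx⟩ := exists_ne (0 : M)
  obtain ⟨y, rfl⟩ := (Module.End.coe_pow Q (k + 1) ▸ hsurj.iterate (k + 1)) x
  exact hx (by rw [h.1, LinearMap.zero_apply])

theorem le_of_ker_pow_le [Nontrivial M] {a b : ℕ} (ha : a ≤ k) (hab : ker (Q ^ a) ≤ ker (Q ^ b)) :
    a ≤ b := by
  obtain ⟨u, hu⟩ := h.exists_pow_apply_ne_zero
  by_contra! hba
  have : (Q ^ b) ((Q ^ (k - a)) u) = 0 := hab (by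
    rw [LinearMap.mem_ker, ← Module.End.mul_apply, ← pow_add, Nat.add_sub_cancel' ha, h.1,
      LinearMap.zero_apply])
  rw [← Module.End.mul_apply, ← pow_add] at this
  exact hu (Module.End.pow_map_zero_of_le (by omega) this)

end Module.End.HasUniformBlockSize

theorem Module.End.coe_pow_restrict_apply {P : Module.End R M} {U : Submodule R M}
    (hU : ∀ x ∈ U, P x ∈ U) (n : ℕ) (x : U) : ((P.restrict hU ^ n) x : M) = (P ^ n) x := by
  rw [Module.End.pow_restrict, LinearMap.restrict_apply]

namespace Module.End.HasUniformBlockSize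

variable {P : Module.End R M} {U : Submodule R M} {hU : ∀ x ∈ U, P x ∈ U} {k : ℕ}
  (h : Module.End.HasUniformBlockSize (P.restrict hU) k)
include h

theorem pow_apply_eq_zero_of_mem {x : M} (hx : x ∈ U) {c : ℕ} (hc : k ≤ c) : (P ^ c) x = 0 :=
  Module.End.pow_map_zero_of_le hc (by
    rw [← Module.End.coe_pow_restrict_apply hU k ⟨x, hx⟩, h.1, LinearMap.zero_apply,
      Submodule.coe_zero])

theorem exists_mem_pow_apply_eq {x : M} (hx : x ∈ U) {m : ℕ} (hm : (P ^ m) x = 0) :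
    ∃ y ∈ U, (P ^ (k - m)) y = x := by
  obtain ⟨y, hy⟩ := ker_pow_le_range_pow h.2 m (x := ⟨x, hx⟩)
    (Subtype.ext (by rw [Module.End.coe_pow_restrict_apply]; exact hm))
  exact ⟨y, y.2, by rw [← Module.End.coe_pow_restrict_apply hU, hy]⟩

theorem le_of_ker_pow_inf_le (hU0 : U ≠ ⊥) {a b : ℕ} (ha : a ≤ k)
    (hab : ker (P ^ a) ⊓ U ≤ ker (P ^ b)) : a ≤ b := by
  have := Submodule.nontrivial_iff_ne_bot.mpr hU0
  refine h.le_of_ker_pow_le ha fun x hx ↦ Subtype.ext ?_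
  rw [LinearMap.mem_ker, ← Subtype.coe_inj, Module.End.coe_pow_restrict_apply] at hx
  rw [Module.End.coe_pow_restrict_apply]
  exact hab ⟨hx, x.2⟩

end Module.End.HasUniformBlockSize

end Blocks

/-! ### Heights of an invariant subspace -/

theorem eq_iSup_ker_pow_inf_range_pow {R M ι : Type*} [Ring R] [AddCommGroup M] [Module R M]
    [Fintype ι] {P : Module.End R M} {A : ι → Submodule R M} (hA : iSupIndep A)
    (htop : ⨆ i, A i = ⊤) (hAP : ∀ i, ∀ x ∈ A i, P x ∈ A i) {k : ι → ℕ}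
    (hblk : ∀ i, Module.End.HasUniformBlockSize (P.restrict (hAP i)) (k i)) {W : Submodule R M}
    (hπW : ∀ j, ∀ w ∈ W, hA.projection htop j w ∈ W) {m : ι → ℕ}
    (hWm : ∀ i, W ⊓ A i ≤ ker (P ^ m i)) (hmW : ∀ i j, ker (P ^ (m i - (k i - k j))) ⊓ A j ≤ W) :
    W = ⨆ i, ker (P ^ m i) ⊓ range (P ^ (k i - m i)) := by
  have hπP (j : ι) (n : ℕ) (x : M) :
      hA.projection htop j ((P ^ n) x) = (P ^ n) (hA.projection htop j x) :=
    congr($(((hA.commute_projection htop hAP j).pow_right n).eq) x)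
  refine le_antisymm (hA.le_iSup_of_projection_mem htop fun j z hz ↦ ?_) (iSup_le fun i ↦ ?_)
  · have hz0 : (P ^ m j) (hA.projection htop j z) = 0 :=
      hWm j ⟨hπW j z hz, hA.projection_apply_mem htop j z⟩
    obtain ⟨y, -, hy⟩ := (hblk j).exists_mem_pow_apply_eq (hA.projection_apply_mem htop j z) hz0
    exact ⟨hz0, y, hy⟩
  · refine (hA.le_iSup_of_projection_mem htop fun j z hz ↦ ?_).trans (iSup_le (hmW i))
    obtain ⟨hz0, v, rfl⟩ := hz
    refine ⟨?_, hA.projection_apply_mem htop j _⟩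
    rw [SetLike.mem_coe, LinearMap.mem_ker] at hz0
    rw [SetLike.mem_coe, LinearMap.mem_ker, hπP]
    rcases (by omega : m i ≤ m i - (k i - k j) ∨ k j ≤ m i - (k i - k j) + (k i - m i)) with h | h
    · exact Module.End.pow_map_zero_of_le h (by rw [← hπP, ← hπP, hz0, map_zero])
    · rw [← Module.End.mul_apply, ← pow_add]
      exact (hblk j).pow_apply_eq_zero_of_mem (hA.projection_apply_mem htop j v) h

section Heights

variable {K V : Type*} [Field K] [AddCommGroup V] [Module K V] {B : LinearMap.BilinForm K V}
  {P : Module.End K V} {W : Submodule K V}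

theorem IsInvariantSubmodule.projection_mem [NeZero (2 : K)] {ι : Type*}
    (hW : IsInvariantSubmodule B P W) {A : ι → Submodule K V} (hA : iSupIndep A)
    (htop : ⨆ i, A i = ⊤) (hAP : ∀ i, ∀ x ∈ A i, P x ∈ A i)
    (horth : ∀ i j, i ≠ j → ∀ u ∈ A i, ∀ v ∈ A j, B u v = 0) (j : ι) {w : V} (hw : w ∈ W) :
    hA.projection htop j w ∈ W :=
  hW.apply_mem_of_isIdempotentElem (Submodule.isIdempotentElem_projection _)
    (hA.isSelfAdjoint_projection htop horth j) (hA.commute_projection htop hAP j) hw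

variable [Infinite K] [NeZero (2 : K)] [FiniteDimensional K V]

theorem IsInvariantSubmodule.ker_pow_inf_le (hW : IsInvariantSubmodule B P W) (hB : B.IsAlt)
    (hP : LinearMap.IsSelfAdjoint B P) {U₁ U₂ : Submodule K V} (hU₁ : ∀ x ∈ U₁, P x ∈ U₁)
    {hU₂ : ∀ x ∈ U₂, P x ∈ U₂} {k₁ k₂ : ℕ} (hk₁ : ∀ x ∈ U₁, (P ^ k₁) x = 0)
    (h₂ : Module.End.HasUniformBlockSize (P.restrict hU₂) k₂)
    (hnd : ∀ u ∈ U₁, (∀ v ∈ U₁, B u v = 0) → u = 0) {w : V} {d : ℕ} (hwW : w ∈ W)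
    (hwU : w ∈ U₁) (hd : (P ^ d) w ≠ 0) (hd1 : (P ^ (d + 1)) w = 0) :
    ker (P ^ (d + 1 - (k₁ - k₂))) ⊓ U₂ ≤ W := by
  obtain ⟨x, hxU, hdual⟩ := exists_mem_forall_apply_pow_eq_ite hP hU₁ hnd hwU hd hd1
  have hdk : d + 1 ≤ k₁ := by
    by_contra! h
    exact hd (Module.End.pow_map_zero_of_le (by omega) (hk₁ w hwU))
  rintro y ⟨hy, hyU⟩
  rw [SetLike.mem_coe, LinearMap.mem_ker] at hy
  rcases Nat.eq_zero_or_pos (d + 1 - (k₁ - k₂)) with he | he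
  · rw [he, pow_zero, Module.End.one_apply] at hy
    exact hy ▸ W.zero_mem
  obtain ⟨y', hy'U, rfl⟩ := h₂.exists_mem_pow_apply_eq hyU hy
  rw [show k₂ - (d + 1 - (k₁ - k₂)) = max k₁ k₂ - 1 - d by omega]
  have hxn : (P ^ (max k₁ k₂ - 1 + 1)) x = 0 :=
    Module.End.pow_map_zero_of_le (by omega) (hk₁ x hxU)
  have hyn : (P ^ (max k₁ k₂ - 1 + 1)) y' = 0 := h₂.pow_apply_eq_zero_of_mem hy'U (by omega)
  exact hW.pow_apply_mem hB hP (by omega) hwW hd1 hdual hxn hyn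

theorem IsInvariantSubmodule.exists_height (hW : IsInvariantSubmodule B P W) (hB : B.IsAlt)
    (hP : LinearMap.IsSelfAdjoint B P) {U : Submodule K V} (hU : ∀ x ∈ U, P x ∈ U) {k : ℕ}
    (hk : ∀ x ∈ U, (P ^ k) x = 0) (hnd : ∀ u ∈ U, (∀ v ∈ U, B u v = 0) → u = 0) :
    ∃ m ≤ k, W ⊓ U ≤ ker (P ^ m) ∧ ∀ (U' : Submodule K V) (hU' : ∀ x ∈ U', P x ∈ U') (k' : ℕ),
      Module.End.HasUniformBlockSize (P.restrict hU') k' → ker (P ^ (m - (k - k'))) ⊓ U' ≤ W := by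
  classical
  have hex : ∃ m, W ⊓ U ≤ ker (P ^ m) := ⟨k, fun x hx ↦ hk x hx.2⟩
  refine ⟨Nat.find hex, Nat.find_min' hex fun x hx ↦ hk x hx.2, Nat.find_spec hex,
    fun U' hU' k' h' ↦ ?_⟩
  cases hm : Nat.find hex with
  | zero =>
    rintro y ⟨hy, -⟩
    rw [Nat.zero_sub, SetLike.mem_coe, LinearMap.mem_ker, pow_zero, Module.End.one_apply] at hy
    exact hy ▸ W.zero_mem
  | succ d =>
    obtain ⟨w, hw, hwd⟩ := SetLike.not_le_iff_exists.mp (Nat.find_min hex (by omega : d < _))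
    exact hW.ker_pow_inf_le hB hP hU hk h' hnd hw.1 hw.2 hwd (hm ▸ Nat.find_spec hex hw)

end Heights

theorem invariant_submodule_iff_heights_general
    (K V : Type*) [RCLike K] [AddCommGroup V] [Module K V] [FiniteDimensional K V]
    (B : LinearMap.BilinForm K V) (hBalt : B.IsAlt)
    (hBnd : ∀ u : V, (∀ v : V, B u v = 0) → u = 0)
    (P : Module.End K V) (hP : ∀ u v : V, B (P u) v = B u (P v))
    {N : ℕ} (Vs : Fin (N + 1) → Submodule K V) (hne : ∀ i, Vs i ≠ ⊥)
    (horth : ∀ i j, i ≠ j → ∀ u ∈ Vs i, ∀ v ∈ Vs j, B u v = 0)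
    (hPVs : ∀ i, ∀ x ∈ Vs i, P x ∈ Vs i)
    (hindep : iSupIndep Vs) (hsup : ⨆ i, Vs i = ⊤)
    (k : Fin (N + 1) → ℕ) (hdec : StrictAnti k)
    (hblk : ∀ i, (P.restrict (hPVs i)) ^ (k i) = 0 ∧
      LinearMap.ker (P.restrict (hPVs i))
        ≤ LinearMap.range ((P.restrict (hPVs i)) ^ (k i - 1)))
    (W : Submodule K V) :
    IsInvariantSubmodule B P W ↔
      ∃ m : Fin (N + 1) → ℕ,
        m (Fin.last N) ≤ k (Fin.last N) ∧
        (∀ i : Fin N, m i.succ ≤ m i.castSucc ∧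
          m i.castSucc + k i.succ ≤ m i.succ + k i.castSucc) ∧
        W = ⨆ i, LinearMap.ker (P ^ m i) ⊓ LinearMap.range (P ^ (k i - m i)) := by
  refine ⟨fun hW ↦ ?_, fun ⟨m, _, _, hWm⟩ ↦
    hWm ▸ isInvariantSubmodule_iSup_ker_pow_inf_range_pow B P _ _⟩
  have hblk' : ∀ i, Module.End.HasUniformBlockSize (P.restrict (hPVs i)) (k i) := hblk
  choose m hmk hWm hmW using fun i ↦ hW.exists_height hBalt hP (hPVs i)
    (fun x hx ↦ (hblk' i).pow_apply_eq_zero_of_mem hx le_rfl)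
    fun u hu ↦ hindep.eq_zero_of_forall_apply_eq_zero hsup horth hBnd hu
  have hcross (i j) : m i - (k i - k j) ≤ m j :=
    (hblk' j).le_of_ker_pow_inf_le (hne j) (by have := hmk i; omega)
      fun x hx ↦ hWm j ⟨hmW i _ (hPVs j) _ (hblk' j) hx, hx.2⟩
  refine ⟨m, hmk _, fun i ↦ ?_, eq_iSup_ker_pow_inf_range_pow hindep hsup hPVs hblk'
    (fun j w hw ↦ hW.projection_mem hindep hsup hPVs horth j hw) hWm
    fun i j ↦ hmW i _ (hPVs j) _ (hblk' j)⟩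
  have := hdec (Fin.castSucc_lt_succ (i := i))
  have := hcross i.succ i.castSucc
  have := hcross i.castSucc i.succ
  omega

/-- **Classification of invariant subspaces.** Let `(V, B)` be a finite-dimensional
symplectic space over `K = ℝ` or `ℂ`, and `P` a nilpotent `B`-self-adjoint operator whose
Jordan block sizes are exactly `k 0 > k 1 > … > k N` (the decomposition of `V` into the
`B`-orthogonal, `P`-invariant sums of Jordan blocks of equal sizes being given by the
subspaces `Vs i`). A subspace `W` is invariant under `Aut(V, B, P)` iff there are integers
`m i` with `0 ≤ m_N ≤ k_N` and `0 ≤ mᵢ − mᵢ₊₁ ≤ kᵢ − kᵢ₊₁` such that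
`W = Σᵢ (Ker P^(m i) ∩ Im P^(k i − m i))`. -/
theorem invariant_submodule_iff_heights
    (K V : Type*) [RCLike K] [AddCommGroup V] [Module K V] [FiniteDimensional K V]
    (B : LinearMap.BilinForm K V) (hBalt : B.IsAlt)
    (hBnd : ∀ u : V, (∀ v : V, B u v = 0) → u = 0)
    (P : Module.End K V) (hP : ∀ u v : V, B (P u) v = B u (P v))
    (hnil : IsNilpotent P)
    {N : ℕ} (Vs : Fin (N + 1) → Submodule K V) (hne : ∀ i, Vs i ≠ ⊥)
    (horth : ∀ i j, i ≠ j → ∀ u ∈ Vs i, ∀ v ∈ Vs j, B u v = 0)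
    (hPVs : ∀ i, ∀ x ∈ Vs i, P x ∈ Vs i)
    (hindep : iSupIndep Vs) (hsup : ⨆ i, Vs i = ⊤)
    (k : Fin (N + 1) → ℕ) (hdec : StrictAnti k)
    (hblk : ∀ i, (P.restrict (hPVs i)) ^ (k i) = 0 ∧
      LinearMap.ker (P.restrict (hPVs i))
        ≤ LinearMap.range ((P.restrict (hPVs i)) ^ (k i - 1)))
    (W : Submodule K V) :
    IsInvariantSubmodule B P W ↔
      ∃ m : Fin (N + 1) → ℕ,
        m (Fin.last N) ≤ k (Fin.last N) ∧
        (∀ i : Fin N, m i.succ ≤ m i.castSucc ∧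
          m i.castSucc + k i.succ ≤ m i.succ + k i.castSucc) ∧
        W = ⨆ i, LinearMap.ker (P ^ m i) ⊓ LinearMap.range (P ^ (k i - m i)) :=
  invariant_submodule_iff_heights_general K V B hBalt hBnd P hP Vs hne horth hPVs hindep hsup k hdec
    hblk W
end

section
/- Let K be the field ℝ or ℂ, (V, B) a finite-dimensional symplectic vector space over K, and P : V → V a nilpotent operator self-adjoint with respect to B. Suppose V = ⊕_{i=1}^N V_i is a B-orthogonal, P-invariant decomposition into nonzero subspaces such that, for each i, all Jordan blocks of P|_{V_i} have size exactly k_i (i.e. (P|_{V_i})^{k_i} = 0 and Ker(P|_{V_i}) ⊆ Im((P|_{V_i})^{k_i − 1})), with k_1 > k_2 > … > k_N. Let W be a subspace invariant under Aut(V, B, P), and suppose W contains a vector v ∈ V_i ∩ Im P^l with v ∉ Im P^{l+1}. Then V_j ∩ Im P^l ⊆ W for every j with k_j < k_i. -/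
open Finset

section Semiring

variable {R : Type*} [Semiring R]

def sandwichSum (p e : R) (m : ℕ) : R :=
  ∑ s ∈ range (m + 1), p ^ s * e * p ^ (m - s)

theorem sandwichSum_succ_eq_sandwichSum_mul_add (p e : R) (m : ℕ) :
    sandwichSum p e (m + 1) = sandwichSum p e m * p + p ^ (m + 1) * e := by
  rw [sandwichSum, sum_range_succ, Nat.sub_self, pow_zero, mul_one, sandwichSum, sum_mul]
  congr 1
  refine sum_congr rfl fun s hs => ?_
  rw [Nat.sub_add_comm (Nat.lt_succ_iff.mp (mem_range.mp hs)), pow_succ]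
  simp only [mul_assoc]

theorem sandwichSum_succ_eq_mul_sandwichSum_add (p e : R) (m : ℕ) :
    sandwichSum p e (m + 1) = p * sandwichSum p e m + e * p ^ (m + 1) := by
  rw [sandwichSum, sum_range_succ', pow_zero, one_mul, Nat.sub_zero, sandwichSum, mul_sum]
  congr 1
  refine sum_congr rfl fun s _ => ?_
  rw [pow_succ', Nat.add_sub_add_right, mul_assoc, mul_assoc, mul_assoc]

theorem commute_sandwichSum {p e : R} {m : ℕ} (hpe : p ^ (m + 1) * e = 0)
    (hep : e * p ^ (m + 1) = 0) : Commute (sandwichSum p e m) p := by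
  have h := (sandwichSum_succ_eq_sandwichSum_mul_add p e m).symm.trans
    (sandwichSum_succ_eq_mul_sandwichSum_add p e m)
  rwa [hpe, hep, add_zero, add_zero] at h

theorem sandwichSum_mul_self {p e : R} {m : ℕ} (h : ∀ r, e * p ^ r * e = 0) :
    sandwichSum p e m * sandwichSum p e m = 0 := by
  rw [sandwichSum, sum_mul_sum]
  refine sum_eq_zero fun s _ => sum_eq_zero fun t _ => ?_
  calc p ^ s * e * p ^ (m - s) * (p ^ t * e * p ^ (m - t))
      = p ^ s * (e * p ^ (m - s + t) * e) * p ^ (m - t) := by simp only [pow_add, mul_assoc]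
    _ = 0 := by rw [h, mul_zero, zero_mul]

end Semiring

section KernelRange

variable {R M : Type*} [CommRing R] [AddCommGroup M] [Module R M]

theorem ker_pow_le_range_pow_sub {f : Module.End R M} {k : ℕ}
    (hker : LinearMap.ker f ≤ LinearMap.range (f ^ (k - 1))) :
    ∀ r ≤ k, LinearMap.ker (f ^ r) ≤ LinearMap.range (f ^ (k - r)) := by
  intro r
  induction r with
  | zero => simp [Module.End.one_eq_id]
  | succ r ih =>
    intro hr y hy
    rw [LinearMap.mem_ker, pow_succ, Module.End.mul_apply] at hy
    obtain ⟨z, hz⟩ := ih (by omega) hy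
    have hfz : f ((f ^ (k - (r + 1))) z) = f y := by
      rw [← hz, ← Module.End.mul_apply, ← pow_succ', Nat.sub_succ', Nat.sub_add_cancel (by omega)]
    obtain ⟨w, hw⟩ := hker (show y - (f ^ (k - (r + 1))) z ∈ LinearMap.ker f by simp [hfz])
    refine ⟨(f ^ r) w + z, ?_⟩
    rw [show k - 1 = k - (r + 1) + r by omega, pow_add, Module.End.mul_apply] at hw
    rw [map_add, hw, sub_add_cancel]

theorem ker_pow_pred_le_range {f : Module.End R M} {k : ℕ}
    (hker : LinearMap.ker f ≤ LinearMap.range (f ^ (k - 1))) :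
    LinearMap.ker (f ^ (k - 1)) ≤ LinearMap.range f := by
  rcases Nat.eq_zero_or_pos k with rfl | hk
  · simp [Module.End.one_eq_id]
  · simpa [Nat.sub_sub_self hk] using ker_pow_le_range_pow_sub hker (k - 1) (Nat.sub_le k 1)

theorem pow_apply_eq_zero_of_pow_restrict_eq_zero {f : Module.End R M} {p : Submodule R M}
    (hf : ∀ x ∈ p, f x ∈ p) {n : ℕ} (h : f.restrict hf ^ n = 0) {x : M} (hx : x ∈ p) :
    (f ^ n) x = 0 := by
  have hx0 := LinearMap.congr_fun h ⟨x, hx⟩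
  rwa [Module.End.pow_restrict, LinearMap.restrict_apply, LinearMap.zero_apply,
    Submodule.mk_eq_zero] at hx0

theorem pow_pred_apply_ne_zero_of_notMem_range {f : Module.End R M} {p : Submodule R M}
    (hf : ∀ x ∈ p, f x ∈ p) {k : ℕ}
    (hker : LinearMap.ker (f.restrict hf) ≤ LinearMap.range (f.restrict hf ^ (k - 1)))
    {u : M} (hu : u ∈ p) {l : ℕ} (hl : (f ^ l) u ∉ LinearMap.range (f ^ (l + 1))) :
    (f ^ (k - 1)) u ≠ 0 := by
  intro h0
  obtain ⟨w, hw⟩ := ker_pow_pred_le_range hker (x := ⟨u, hu⟩) (by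
    rwa [LinearMap.mem_ker, Module.End.pow_restrict, LinearMap.restrict_apply,
      Submodule.mk_eq_zero])
  have hfw : f w = u := congrArg Subtype.val hw
  exact hl ⟨w, by rw [pow_succ, Module.End.mul_apply, hfw]⟩

end KernelRange

section Decomposition

variable {R M ι : Type*} [Ring R] [AddCommGroup M] [Module R M] {p : ι → Submodule R M}

theorem Submodule.inf_range_le_map_of_iSupIndep (hind : iSupIndep p) (hsup : ⨆ i, p i = ⊤)
    {f : Module.End R M} (hf : ∀ i, ∀ x ∈ p i, f x ∈ p i) (i : ι) :
    p i ⊓ LinearMap.range f ≤ (p i).map f := by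
  rintro _ ⟨hy, z, rfl⟩
  have hz : z ∈ p i ⊔ ⨆ (j) (_ : j ≠ i), p j := by rw [← iSup_split_single, hsup]; trivial
  obtain ⟨a, ha, c, hc, rfl⟩ := Submodule.mem_sup.mp hz
  have hfc : f c ∈ ⨆ (j) (_ : j ≠ i), p j := by
    refine (Submodule.map_le_iff_le_comap.mpr ?_) (Submodule.mem_map_of_mem hc)
    exact iSup₂_le fun j _ x hx =>
      Submodule.mem_iSup_of_mem j (Submodule.mem_iSup_of_mem ‹_› (hf j x hx))
  have hfc' : f c ∈ p i := by simpa [map_add] using sub_mem hy (hf i a ha)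
  have hfc0 : f c = 0 := Submodule.disjoint_def.mp (hind i) _ hfc' hfc
  exact ⟨a, ha, by rw [map_add, hfc0, add_zero]⟩

end Decomposition

section Descent

variable {R M : Type*} [Ring R] [AddCommGroup M] [Module R M]

theorem pow_apply_mem_of_sum_smul_pow_apply_mem {P : Module.End R M} {S W : Submodule R M}
    (hS : ∀ x ∈ S, P x ∈ S) {n : ℕ} (hn : ∀ x ∈ S, (P ^ n) x = 0) {c : ℕ → R} {l m : ℕ}
    (hlm : l ≤ m) (hc : ∀ s < l, c s = 0) (hcl : c l = 1)
    (hsum : ∀ x ∈ S, ∑ s ∈ range (m + 1), c s • (P ^ s) x ∈ W) {x : M} (hx : x ∈ S) :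
    (P ^ l) x ∈ W := by
  suffices h : ∀ d r, n ≤ r + d → ∀ x ∈ S, (P ^ (l + r)) x ∈ W by
    simpa using h n 0 (by omega) x hx
  intro d
  induction d with
  | zero =>
    intro r hr x hx
    rw [Module.End.pow_map_zero_of_le (by omega) (hn x hx)]
    exact W.zero_mem
  | succ d ih =>
    intro r hr x hx
    have hPr : ∀ s, (P ^ s) ((P ^ r) x) = (P ^ (s + r)) x := fun s => by
      rw [← Module.End.mul_apply, ← pow_add]
    have hall := hsum _ (Module.End.pow_apply_mem_of_forall_mem r hS x hx)
    rw [← add_sum_erase _ _ (mem_range.mpr (Nat.lt_succ_of_le hlm)), hcl, one_smul, hPr] at hall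
    have hrest : ∑ s ∈ (range (m + 1)).erase l, c s • (P ^ s) ((P ^ r) x) ∈ W := by
      refine W.sum_mem fun s hs => ?_
      rcases lt_or_gt_of_ne (ne_of_mem_erase hs) with hsl | hsl
      · rw [hc s hsl, zero_smul]
        exact W.zero_mem
      · rw [hPr, show s + r = l + (r + (s - l)) by omega]
        exact W.smul_mem _ (ih _ (by omega) x hx)
    simpa [add_comm l r] using W.sub_mem hall hrest

end Descent

section BilinForm

variable {K V ι : Type*} [Field K] [AddCommGroup V] [Module K V] {B : LinearMap.BilinForm K V}

theorem exists_mem_apply_eq_one_of_orthogonal {p : ι → Submodule K V}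
    (hBnd : ∀ u : V, (∀ v : V, B u v = 0) → u = 0)
    (horth : ∀ i j, i ≠ j → ∀ u ∈ p i, ∀ v ∈ p j, B u v = 0) (hsup : ⨆ i, p i = ⊤)
    {i : ι} {x : V} (hx : x ∈ p i) (hx0 : x ≠ 0) : ∃ y ∈ p i, B x y = 1 := by
  obtain ⟨y, hy, hxy⟩ : ∃ y ∈ p i, B x y ≠ 0 := by
    by_contra! h
    refine hx0 (hBnd x fun y => ?_)
    have hker : ⨆ j, p j ≤ LinearMap.ker (B x) := iSup_le fun j z hz => by
      by_cases hji : j = i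
      · exact h z (hji ▸ hz)
      · exact horth i j (Ne.symm hji) x hx z hz
    exact hker (hsup ▸ Submodule.mem_top)
  refine ⟨(B x y)⁻¹ • y, Submodule.smul_mem _ _ hy, ?_⟩
  rw [map_smul, smul_eq_mul, inv_mul_cancel₀ hxy]

variable {P : Module.End K V}

theorem isSelfAdjoint_pow (hP : B.IsSelfAdjoint P) (n : ℕ) : B.IsSelfAdjoint ⇑(P ^ n) := by
  induction n with
  | zero => exact LinearMap.isAdjointPair_one
  | succ n ih =>
    have h := ih.mul hP
    rwa [← pow_succ, ← pow_succ'] at h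

theorem apply_pow_self_eq_zero [NeZero (2 : K)] (hB : B.IsAlt) (hP : B.IsSelfAdjoint P)
    (r : ℕ) (x : V) : B ((P ^ r) x) x = 0 := by
  obtain ⟨q, rfl | rfl⟩ := Nat.even_or_odd' r
  · rw [two_mul, pow_add, Module.End.mul_apply, isSelfAdjoint_pow hP]
    exact hB.self_eq_zero _
  · rw [show 2 * q + 1 = q + (q + 1) by ring, pow_add, Module.End.mul_apply,
      isSelfAdjoint_pow hP, pow_succ', Module.End.mul_apply]
    have hy : B (P ((P ^ q) x)) ((P ^ q) x) = -B (P ((P ^ q) x)) ((P ^ q) x) :=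
      (hP _ _).trans (LinearMap.IsAlt.neg hB _ _).symm
    have h2 : (2 : K) * B (P ((P ^ q) x)) ((P ^ q) x) = 0 := by linear_combination hy
    exact (mul_eq_zero.mp h2).resolve_left two_ne_zero

def rankTwoSkew (B : LinearMap.BilinForm K V) (a b : V) : Module.End K V :=
  (B.flip a).smulRight b + (B.flip b).smulRight a

@[simp]
theorem rankTwoSkew_apply (a b y : V) : rankTwoSkew B a b y = B y a • b + B y b • a := rfl

theorem isSkewAdjoint_rankTwoSkew (hB : B.IsAlt) (a b : V) :
    B.IsSkewAdjoint ⇑(rankTwoSkew B a b) := by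
  intro y z
  simp only [rankTwoSkew_apply, Pi.neg_apply, map_add, map_smul, LinearMap.add_apply,
    LinearMap.smul_apply, smul_eq_mul, map_neg]
  rw [← LinearMap.IsAlt.neg hB a z, ← LinearMap.IsAlt.neg hB b z]
  ring

theorem rankTwoSkew_mul_pow_mul [NeZero (2 : K)] (hB : B.IsAlt) (hP : B.IsSelfAdjoint P)
    {a b : V} (hab : ∀ r, B ((P ^ r) a) b = 0) (r : ℕ) :
    rankTwoSkew B a b * P ^ r * rankTwoSkew B a b = 0 := by
  have hba : ∀ r, B ((P ^ r) b) a = 0 := fun r => by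
    rw [isSelfAdjoint_pow hP, ← LinearMap.IsAlt.neg hB, hab, neg_zero]
  ext y
  simp [hab, hba, apply_pow_self_eq_zero hB hP]

theorem pow_mul_rankTwoSkew {a b : V} {n : ℕ} (ha : (P ^ n) a = 0) (hb : (P ^ n) b = 0) :
    P ^ n * rankTwoSkew B a b = 0 := by
  ext y
  simp [ha, hb]

theorem rankTwoSkew_mul_pow (hP : B.IsSelfAdjoint P) {a b : V} {n : ℕ} (ha : (P ^ n) a = 0)
    (hb : (P ^ n) b = 0) : rankTwoSkew B a b * P ^ n = 0 := by
  ext y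
  simp [isSelfAdjoint_pow hP n y, ha, hb]

theorem isSkewAdjoint_sandwichSum (hP : B.IsSelfAdjoint P) {E : Module.End K V}
    (hE : B.IsSkewAdjoint ⇑E) (m : ℕ) : B.IsSkewAdjoint ⇑(sandwichSum P E m) := by
  intro y z
  calc B (sandwichSum P E m y) z
      = ∑ s ∈ range (m + 1), B ((P ^ s * E * P ^ (m - s)) y) z := by
        simp [sandwichSum, LinearMap.sum_apply]
    _ = ∑ s ∈ range (m + 1), -B y ((P ^ (m - s) * E * P ^ s) z) := by
        refine sum_congr rfl fun s _ => ?_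
        rw [Module.End.mul_apply, Module.End.mul_apply, isSelfAdjoint_pow hP, hE, Pi.neg_apply,
          map_neg, isSelfAdjoint_pow hP, Module.End.mul_apply, Module.End.mul_apply]
    _ = ∑ s ∈ range (m + 1), -B y ((P ^ s * E * P ^ (m - s)) z) := by
        rw [← sum_range_reflect]
        refine sum_congr rfl fun s hs => ?_
        rw [Nat.add_sub_cancel, Nat.sub_sub_self (Nat.lt_succ_iff.mp (mem_range.mp hs))]
    _ = B y ((-⇑(sandwichSum P E m)) z) := by
        simp [sandwichSum]

theorem sandwichSum_rankTwoSkew_apply {a b v : V} (hvb : ∀ r, B ((P ^ r) v) b = 0) (m : ℕ) :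
    sandwichSum P (rankTwoSkew B a b) m v =
      ∑ s ∈ range (m + 1), B ((P ^ (m - s)) v) a • (P ^ s) b := by
  simp [sandwichSum, LinearMap.sum_apply, hvb]

end BilinForm

section Invariant

variable {K V : Type*} [Field K] [AddCommGroup V] [Module K V] {B : LinearMap.BilinForm K V}
  {P : Module.End K V} {W : Submodule K V}

theorem IsInvariantSubmodule.apply_mem_of_isSkewAdjoint_s10 (hW : IsInvariantSubmodule B P W)
    {X : Module.End K V} (hX : B.IsSkewAdjoint ⇑X) (hXX : X * X = 0) (hXP : Commute X P)
    {w : V} (hw : w ∈ W) : X w ∈ W := by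
  have hright : (1 + X).comp (1 - X) = LinearMap.id := by
    rw [← Module.End.mul_eq_comp, ← Module.End.one_eq_id]
    simp [add_mul, mul_sub, hXX]
  have hleft : (1 - X).comp (1 + X) = LinearMap.id := by
    rw [← Module.End.mul_eq_comp, ← Module.End.one_eq_id]
    simp [sub_mul, mul_add, hXX]
  let g : V ≃ₗ[K] V := LinearEquiv.ofLinearMap (1 + X) (1 - X) hright hleft
  have hg : ∀ y, g y = y + X y := fun _ => rfl
  have hgB : ∀ y z, B (g y) (g z) = B y z := fun y z => by
    have h1 := hX y z
    have h2 := hX y (X z)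
    simp only [Pi.neg_apply, map_neg, ← Module.End.mul_apply, hXX, LinearMap.zero_apply,
      map_zero] at h1 h2
    simp only [hg, map_add, LinearMap.add_apply, h1, h2]
    ring
  have hgP : ∀ y, g (P y) = P (g y) := fun y => by
    simp only [hg, map_add, ← Module.End.mul_apply, hXP.eq]
  have hgw : g w ∈ W := hW g hgB hgP ▸ Submodule.mem_map_of_mem hw
  simpa [hg] using W.sub_mem hgw hw

theorem IsInvariantSubmodule.sandwichSum_rankTwoSkew_apply_mem [NeZero (2 : K)]
    (hW : IsInvariantSubmodule B P W) (hB : B.IsAlt) (hP : B.IsSelfAdjoint P) {a b : V}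
    (hab : ∀ r, B ((P ^ r) a) b = 0) {m : ℕ} (ha : (P ^ (m + 1)) a = 0) (hb : (P ^ (m + 1)) b = 0)
    {w : V} (hw : w ∈ W) : sandwichSum P (rankTwoSkew B a b) m w ∈ W :=
  hW.apply_mem_of_isSkewAdjoint_s10 (isSkewAdjoint_sandwichSum hP (isSkewAdjoint_rankTwoSkew hB a b) m)
    (sandwichSum_mul_self (rankTwoSkew_mul_pow_mul hB hP hab))
    (commute_sandwichSum (pow_mul_rankTwoSkew ha hb) (rankTwoSkew_mul_pow hP ha hb)) hw

end Invariant

theorem invariant_submodule_contains_image_levels_general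
    (K V : Type*) [RCLike K] [AddCommGroup V] [Module K V]
    (B : LinearMap.BilinForm K V) (hBalt : B.IsAlt)
    (hBnd : ∀ u : V, (∀ v : V, B u v = 0) → u = 0)
    (P : Module.End K V) (hP : ∀ u v : V, B (P u) v = B u (P v))
    {N : ℕ} (Vs : Fin (N + 1) → Submodule K V)
    (horth : ∀ i j, i ≠ j → ∀ u ∈ Vs i, ∀ v ∈ Vs j, B u v = 0)
    (hPVs : ∀ i, ∀ x ∈ Vs i, P x ∈ Vs i)
    (hindep : iSupIndep Vs) (hsup : ⨆ i, Vs i = ⊤)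
    (k : Fin (N + 1) → ℕ)
    (hblk : ∀ i, (P.restrict (hPVs i)) ^ (k i) = 0 ∧
      LinearMap.ker (P.restrict (hPVs i))
        ≤ LinearMap.range ((P.restrict (hPVs i)) ^ (k i - 1)))
    (W : Submodule K V) (hW : IsInvariantSubmodule B P W)
    (i : Fin (N + 1)) (lnat : ℕ) (v : V)
    (hvW : v ∈ W) (hvV : v ∈ Vs i) (hvIm : v ∈ LinearMap.range (P ^ lnat))
    (hv' : v ∉ LinearMap.range (P ^ (lnat + 1))) :
    ∀ j : Fin (N + 1), k j < k i → Vs j ⊓ LinearMap.range (P ^ lnat) ≤ W := by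
  have hPpow : ∀ t n, ∀ x ∈ Vs t, (P ^ n) x ∈ Vs t := fun t n =>
    Module.End.pow_apply_mem_of_forall_mem n (hPVs t)
  have hkill : ∀ t, ∀ x ∈ Vs t, (P ^ k t) x = 0 := fun t _ =>
    pow_apply_eq_zero_of_pow_restrict_eq_zero (hPVs t) (hblk t).1
  have hmap : ∀ t n, Vs t ⊓ LinearMap.range (P ^ n) ≤ (Vs t).map (P ^ n) := fun t n =>
    Submodule.inf_range_le_map_of_iSupIndep hindep hsup (fun s => hPpow s n) t
  obtain ⟨u, hu, rfl⟩ := hmap i lnat ⟨hvV, hvIm⟩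
  have hlk : lnat < k i := by
    by_contra! h
    exact hv' ⟨0, by rw [map_zero, Module.End.pow_map_zero_of_le h (hkill i u hu)]⟩
  have htop : (P ^ (k i - 1)) u ≠ 0 :=
    pow_pred_apply_ne_zero_of_notMem_range (hPVs i) (hblk i).2 hu hv'
  obtain ⟨u', hu', hu'1⟩ :=
    exists_mem_apply_eq_one_of_orthogonal hBnd horth hsup (hPpow i _ u hu) htop
  intro j hji y hy
  obtain ⟨x, hx, rfl⟩ := hmap j lnat hy
  have hij : i ≠ j := fun h => (h ▸ hji).false
  refine pow_apply_mem_of_sum_smul_pow_apply_mem (hPVs j) (hkill j) (m := k i - 1)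
    (c := fun s => B ((P ^ (k i - 1 - s)) ((P ^ lnat) u)) u') (by omega) ?_ ?_ ?_ hx
  · intro s hs
    rw [← Module.End.mul_apply, ← pow_add,
      Module.End.pow_map_zero_of_le (by omega) (hkill i u hu), map_zero, LinearMap.zero_apply]
  · rw [← Module.End.mul_apply, ← pow_add, Nat.sub_add_cancel (by omega), hu'1]
  · intro b hb
    rw [← sandwichSum_rankTwoSkew_apply
      (fun r => horth i j hij _ (hPpow i r _ (hPpow i lnat u hu)) b hb)]
    refine hW.sandwichSum_rankTwoSkew_apply_mem hBalt hP
      (fun r => horth i j hij _ (hPpow i r u' hu') b hb) ?_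
      (Module.End.pow_map_zero_of_le (by omega) (hkill j b hb)) hvW
    rw [Nat.sub_add_cancel (by omega)]
    exact hkill i u' hu'

theorem invariant_submodule_contains_image_levels
    (K V : Type*) [RCLike K] [AddCommGroup V] [Module K V] [FiniteDimensional K V]
    (B : LinearMap.BilinForm K V) (hBalt : B.IsAlt)
    (hBnd : ∀ u : V, (∀ v : V, B u v = 0) → u = 0)
    (P : Module.End K V) (hP : ∀ u v : V, B (P u) v = B u (P v))
    (hnil : IsNilpotent P)
    {N : ℕ} (Vs : Fin (N + 1) → Submodule K V) (hne : ∀ i, Vs i ≠ ⊥)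
    (horth : ∀ i j, i ≠ j → ∀ u ∈ Vs i, ∀ v ∈ Vs j, B u v = 0)
    (hPVs : ∀ i, ∀ x ∈ Vs i, P x ∈ Vs i)
    (hindep : iSupIndep Vs) (hsup : ⨆ i, Vs i = ⊤)
    (k : Fin (N + 1) → ℕ) (hdec : StrictAnti k)
    (hblk : ∀ i, (P.restrict (hPVs i)) ^ (k i) = 0 ∧
      LinearMap.ker (P.restrict (hPVs i))
        ≤ LinearMap.range ((P.restrict (hPVs i)) ^ (k i - 1)))
    (W : Submodule K V) (hW : IsInvariantSubmodule B P W)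
    (i : Fin (N + 1)) (lnat : ℕ) (v : V)
    (hvW : v ∈ W) (hvV : v ∈ Vs i) (hvIm : v ∈ LinearMap.range (P ^ lnat))
    (hv' : v ∉ LinearMap.range (P ^ (lnat + 1))) :
    ∀ j : Fin (N + 1), k j < k i → Vs j ⊓ LinearMap.range (P ^ lnat) ≤ W :=
  invariant_submodule_contains_image_levels_general K V B hBalt hBnd P hP Vs horth hPVs hindep hsup
    k hblk W hW i lnat v hvW hvV hvIm hv'
end
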